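/- Let h_1,...,h_r : Z → X and f_1,...,f_r : X → Y be fibrewise maps over B such that f_i ∘ h_s ≃_B f_{i+1} ∘ h_s for all 1 ≤ i ≤ r−1 and 2 ≤ s ≤ r. Then D_B(f_1∘h_1,...,f_r∘h_1) ≤ D_B(h_1,...,h_r). -/

import Mathlib

open Set

/-- Two continuous maps are fibrewise homotopic over `B`: there is a homotopy
whose every time-slice commutes with the projections to `B`. -/
def FibHomotopic {B X Y : Type*} [TopologicalSpace B] [TopologicalSpace X] [TopologicalSpace Y]
    (pX : X → B) (pY : Y → B) (f g : C(X, Y)) : Prop :=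
  ∃ H : f.Homotopy g, ∀ (x : X) (t : unitInterval), pY (H (t, x)) = pX x

/-- Sequential parametrized homotopic distance of a family of fibrewise maps:
the least `n` such that `X` admits an open cover by `n + 1` open sets on each of
which all the maps are pairwise fibrewise homotopic (`∞` if none exists). -/
noncomputable def fibDist {B X Y ι : Type*} [TopologicalSpace B] [TopologicalSpace X]
    [TopologicalSpace Y] (pX : X → B) (pY : Y → B) (f : ι → C(X, Y)) : ℕ∞ :=
  sInf {n : ℕ∞ | ∃ k : ℕ, (k : ℕ∞) = n ∧ ∃ U : Fin (k + 1) → Set X,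
    (∀ i, IsOpen (U i)) ∧ (⋃ i, U i) = Set.univ ∧
    ∀ i s t, FibHomotopic (fun x : U i => pX (x : X)) pY
      ((f s).restrict (U i)) ((f t).restrict (U i))}

/-!
On each open set of a cover witnessing `D_B(h_1, …, h_r)` all the `h_s` are fibrewise
homotopic to `h_1`, so there `f_i ∘ h_1 ≃_B f_i ∘ h_s ≃_B f_{i+1} ∘ h_s ≃_B f_{i+1} ∘ h_1`
(for `s = i + 1`). Chaining these, all the `f_i ∘ h_1` are pairwise fibrewise homotopic on
that set, so the same cover witnesses `D_B(f_1 ∘ h_1, …, f_r ∘ h_1)`.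
-/

namespace FibHomotopic

variable {B X Y Z : Type*} [TopologicalSpace B] [TopologicalSpace X] [TopologicalSpace Y]
  [TopologicalSpace Z] {pX : X → B} {pY : Y → B} {pZ : Z → B}

protected lemma refl (f : C(X, Y)) (hf : ∀ x, pY (f x) = pX x) : FibHomotopic pX pY f f :=
  ⟨.refl f, fun x _ => hf x⟩

protected lemma symm {f g : C(X, Y)} (h : FibHomotopic pX pY f g) :
    FibHomotopic pX pY g f :=
  let ⟨H, hH⟩ := h
  ⟨H.symm, fun x t => hH x (unitInterval.symm t)⟩

protected lemma trans {f g k : C(X, Y)} (h₁ : FibHomotopic pX pY f g)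
    (h₂ : FibHomotopic pX pY g k) : FibHomotopic pX pY f k := by
  obtain ⟨H, hH⟩ := h₁
  obtain ⟨K, hK⟩ := h₂
  refine ⟨H.trans K, fun x t => ?_⟩
  rw [ContinuousMap.Homotopy.trans_apply]
  split_ifs
  exacts [hH x _, hK x _]

lemma comp_left (f : C(X, Y)) (hf : ∀ x, pY (f x) = pX x) {g₁ g₂ : C(Z, X)}
    (hg : FibHomotopic pZ pX g₁ g₂) : FibHomotopic pZ pY (f.comp g₁) (f.comp g₂) :=
  let ⟨H, hH⟩ := hg
  ⟨(ContinuousMap.Homotopy.refl f).comp H, fun x t => (hf _).trans (hH x t)⟩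

lemma restrict {f g : C(Z, Y)} (hfg : FibHomotopic pZ pY f g) (U : Set Z) :
    FibHomotopic (fun x : U => pZ x) pY (f.restrict U) (g.restrict U) :=
  let ⟨H, hH⟩ := hfg
  ⟨H.compContinuousMap (.restrict U (.id Z)), fun x t => hH x t⟩

lemma comp_of_comp_right {f₁ f₂ : C(X, Y)} (hf₁ : ∀ x, pY (f₁ x) = pX x)
    (hf₂ : ∀ x, pY (f₂ x) = pX x) {g₁ g₂ : C(Z, X)} (hg : FibHomotopic pZ pX g₁ g₂)
    (h : FibHomotopic pZ pY (f₁.comp g₂) (f₂.comp g₂)) :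
    FibHomotopic pZ pY (f₁.comp g₁) (f₂.comp g₁) :=
  (hg.comp_left f₁ hf₁).trans (h.trans (hg.symm.comp_left f₂ hf₂))

lemma of_succ {r : ℕ} {g : Fin r → C(X, Y)} (hg : ∀ i x, pY (g i x) = pX x)
    (hsucc : ∀ (i : ℕ) (hi : i + 1 < r), FibHomotopic pX pY (g ⟨i, Nat.lt_of_succ_lt hi⟩) (g ⟨i + 1, hi⟩))
    (s t : Fin r) : FibHomotopic pX pY (g s) (g t) := by
  wlog hst : s ≤ t generalizing s t
  · exact (this t s (le_of_not_ge hst)).symm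
  obtain ⟨s, hs⟩ := s
  obtain ⟨t, ht⟩ := t
  rw [Fin.mk_le_mk] at hst
  induction t, hst using Nat.le_induction with
  | base => exact .refl _ (hg _)
  | succ n _ ih => exact (ih (by omega)).trans (hsucc n ht)

end FibHomotopic

lemma fibDist_le_fibDist {B X Y Z ι κ : Type*} [TopologicalSpace B] [TopologicalSpace X]
    [TopologicalSpace Y] [TopologicalSpace Z] {pX : X → B} {pY : Y → B} {pZ : Z → B}
    {h : ι → C(Z, X)} {g : κ → C(Z, Y)}
    (H : ∀ U : Set Z, IsOpen U →
      (∀ s t, FibHomotopic (fun x : U => pZ x) pX ((h s).restrict U) ((h t).restrict U)) →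
      ∀ s t, FibHomotopic (fun x : U => pZ x) pY ((g s).restrict U) ((g t).restrict U)) :
    fibDist pZ pY g ≤ fibDist pZ pX h := by
  apply sInf_le_sInf
  rintro n ⟨k, hk, U, hUopen, hUcov, hUhom⟩
  exact ⟨k, hk, U, hUopen, hUcov, fun i => H (U i) (hUopen i) (hUhom i)⟩

theorem stmt8 {B X Y Z : Type*} [TopologicalSpace B] [TopologicalSpace X] [TopologicalSpace Y]
    [TopologicalSpace Z] (pX : X → B) (pY : Y → B) (pZ : Z → B)
    (r : ℕ) (hr : 0 < r)
    (h : Fin r → C(Z, X)) (hh : ∀ i z, pX (h i z) = pZ z)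
    (f : Fin r → C(X, Y)) (hf : ∀ i x, pY (f i x) = pX x)
    (hcomp : ∀ (i : ℕ) (hi : i + 1 < r) (s : Fin r), 1 ≤ s.val →
      FibHomotopic pZ pY ((f ⟨i, by omega⟩).comp (h s)) ((f ⟨i + 1, hi⟩).comp (h s))) :
    fibDist pZ pY (fun i => (f i).comp (h ⟨0, hr⟩)) ≤ fibDist pZ pX h := by
  refine fibDist_le_fibDist fun U _ hU => ?_
  refine FibHomotopic.of_succ (g := fun i => (f i).comp ((h ⟨0, hr⟩).restrict U))
    (fun i x => (hf _ _).trans (hh _ _)) fun i hi => ?_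
  exact FibHomotopic.comp_of_comp_right (hf _) (hf _) (hU ⟨0, hr⟩ ⟨i + 1, hi⟩)
    ((hcomp i hi ⟨i + 1, hi⟩ (Nat.le_add_left 1 i)).restrict U)
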